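/- Fix I ≥ 1 and let M_I be the structure with domain {(m,n) ∈ ℕ × ℤ : m ≤ I, m = 0 → n ≥ 0}, addition (m₁,n₁)+(m₂,n₂) = (m₁ ↾ m₂, n₁+n₂) (where a ↾ b = a if a ≠ 0, else b), and successor s((m,n)) = (m,n+1). Define χ(x) to hold iff there exist y₁, y₂, y₃ in M_I with x + y₁ ≠ x + y₂ and x + (y₃ + y₁) = x + (y₃ + y₂). Then: (i) χ holds exactly at the standard elements (those of type 0), i.e., χ((0,n)) holds for all n ∈ ℕ and χ((m,n)) fails whenever m ≥ 1; (ii) consequently χ satisfies χ(0) and χ(x) → χ(s(x)) for all x ∈ M_I, yet χ does not hold for all x ∈ M_I. -/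
import Mathlib


namespace Stmt11

def res (a b : ℕ) : ℕ := if a ≠ 0 then a else b

def D (I : ℕ) : Type := {x : ℕ × ℤ // x.1 ≤ I ∧ (x.1 = 0 → 0 ≤ x.2)}

def zero (I : ℕ) : D I := ⟨(0, 0), ⟨Nat.zero_le I, fun _ => le_refl 0⟩⟩

def succ {I : ℕ} (a : D I) : D I :=
  ⟨(a.1.1, a.1.2 + 1), ⟨a.2.1, fun h => by have := a.2.2 h; omega⟩⟩

def add {I : ℕ} (a b : D I) : D I :=
  ⟨(res a.1.1 b.1.1, a.1.2 + b.1.2), by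
    refine ⟨?_, ?_⟩
    · unfold res; split
      · exact a.2.1
      · exact b.2.1
    · intro h
      unfold res at h
      split at h
      · omega
      · rename_i h0
        push_neg at h0
        have := a.2.2 h0
        have := b.2.2 h
        omega⟩

/-- The ∃₁ property `χ(x)`. -/
def chi {I : ℕ} (x : D I) : Prop :=
  ∃ y₁ y₂ y₃ : D I, add x y₁ ≠ add x y₂ ∧ add x (add y₃ y₁) = add x (add y₃ y₂)

lemma chi_of_fst_zero {I : ℕ} (hI : 1 ≤ I) (x : D I) (hx : x.1.1 = 0) : chi x := by
  refine ⟨zero I, ⟨(1, 0), ⟨hI, by simp⟩⟩, ⟨(1, 0), ⟨hI, by simp⟩⟩, ?_, ?_⟩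
  · intro h
    have := congrArg (fun z : D I => z.1.1) h
    simp only [add, zero, res, hx] at this
    norm_num at this
  · apply Subtype.ext
    simp [add, zero, res, hx]

lemma not_chi {I : ℕ} (x : D I) (hx : 1 ≤ x.1.1) : ¬ chi x := by
  rintro ⟨y₁, y₂, y₃, hne, heq⟩
  apply hne
  have hx0 : x.1.1 ≠ 0 := by omega
  have h2 := congrArg (fun z : D I => z.1.2) heq
  apply Subtype.ext
  simp only [add, res, if_pos hx0] at h2 ⊢
  simp only [Prod.mk.injEq]
  exact ⟨trivial, by omega⟩

theorem stmt11 (I : ℕ) (hI : 1 ≤ I) :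
    (∀ n : ℕ, chi (I := I) ⟨(0, (n : ℤ)), ⟨Nat.zero_le I, fun _ => Int.natCast_nonneg n⟩⟩) ∧
    (∀ x : D I, 1 ≤ x.1.1 → ¬ chi x) ∧
    chi (zero I) ∧
    (∀ x : D I, chi x → chi (succ x)) ∧
    ¬ (∀ x : D I, chi x) := by
  refine ⟨fun n => chi_of_fst_zero hI _ rfl, fun x hx => not_chi x hx,
    chi_of_fst_zero hI _ rfl, ?_, ?_⟩
  · intro x hx
    have hx0 : x.1.1 = 0 := by
      by_contra h
      exact not_chi x (by omega) hx
    exact chi_of_fst_zero hI _ hx0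
  · intro h
    exact not_chi ⟨(1, 0), ⟨hI, by simp⟩⟩ (by simp) (h _)
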